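/- Loday–Ronco interval formula: for permutations a ∈ S_p and b ∈ S_q, the shifted shuffle product satisfies a ⊔̄ b = Σ_{a□b ≤ σ ≤ b△a} σ, the sum of all permutations σ ∈ S_{p+q} in the interval [a □ b, b △ a] of the right weak order. -/

import Mathlib

/-!
The letters below `p` of a shuffle `σ` of `a` and `b̄` spell `a`, and the others spell `b̄`.
Hence `σ` has all inversions of `a` and of `b̄`, and otherwise only inversions of a large letter
over a small one, which places it between `a □ b` and `b △ a`. Conversely, restricting a word of
that interval to the small letters (resp. the large ones) squeezes its inversion set between
those of `a` (resp. `b̄`) computed in both endpoints, and a permutation word is determined by its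
inversion set. The shuffles of `a` and `b̄` are pairwise distinct, so the shuffle sum is the
indicator of the interval.
-/

/-- Standardization (0-based): replace each letter by its rank among the letters of `w`. -/
def stW (w : List ℕ) : List ℕ := w.map (fun x => (w.filter (· < x)).length)

/-- `w` is the one-line word of a permutation of `{0, …, n-1}` where `n = w.length`. -/
def IsPermWord (w : List ℕ) : Prop := w.Perm (List.range w.length)

/-- The inversion set of a word: pairs `(j, i)` with `j > i` and `j` to the left of `i`. -/
def invSet (w : List ℕ) : Set (ℕ × ℕ) :=
  {p | p.2 < p.1 ∧ ∃ k l : ℕ, k < l ∧ w[k]? = some p.1 ∧ w[l]? = some p.2}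

/-- The right weak order: inclusion of inversion sets. -/
def weakLe (u v : List ℕ) : Prop := invSet u ⊆ invSet v

/-- Left shifted concatenation `v △ u`: the word `v̄ u`, `v̄` being `v` shifted by `|u|`. -/
def triangle (v u : List ℕ) : List ℕ := v.map (· + u.length) ++ u

/-- Right shifted concatenation `u □ v`: the word `u v̄`, `v̄` being `v` shifted by `|u|`. -/
def squareC (u v : List ℕ) : List ℕ := u ++ v.map (· + u.length)

/-- The list of all shuffles of two words. -/
def shuffles : List ℕ → List ℕ → List (List ℕ)
  | [], v => [v]
  | u, [] => [u]
  | a :: u, b :: v =>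
      (shuffles u (b :: v)).map (a :: ·) ++ (shuffles (a :: u) v).map (b :: ·)
termination_by u v => u.length + v.length

namespace List

theorem pair_sublist_iff_getElem? {α : Type*} {x y : α} {w : List α} :
    [x, y] <+ w ↔ ∃ k l : ℕ, k < l ∧ w[k]? = some x ∧ w[l]? = some y := by
  constructor
  · intro h
    obtain ⟨is, h, hlt⟩ := sublist_eq_map_getElem h
    rcases is with _ | ⟨i, _ | ⟨j, _ | _⟩⟩ <;> simp at h
    exact ⟨i, j, by simpa using hlt, by simp [h.1], by simp [h.2]⟩
  · rintro ⟨k, l, hkl, hk, hl⟩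
    obtain ⟨hk', rfl⟩ := getElem?_eq_some_iff.mp hk
    obtain ⟨hl', rfl⟩ := getElem?_eq_some_iff.mp hl
    simpa using map_getElem_sublist (l := w) (is := [⟨k, hk'⟩, ⟨l, hl'⟩]) (by simpa using hkl)

theorem pair_sublist_append_iff {α : Type*} {x y : α} {u v : List α} :
    [x, y] <+ u ++ v ↔ [x, y] <+ u ∨ [x, y] <+ v ∨ (x ∈ u ∧ y ∈ v) := by
  rw [sublist_append_iff]
  constructor
  · rintro ⟨_ | ⟨c, _ | ⟨d, l⟩⟩, r, h, h₁, h₂⟩ <;>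
      simp only [cons_append, nil_append, cons.injEq, nil_eq, append_eq_nil_iff] at h <;> grind
  · rintro (h | h | ⟨hx, hy⟩)
    · exact ⟨[x, y], [], by simp, h, by simp⟩
    · exact ⟨[], [x, y], by simp, by simp, h⟩
    · exact ⟨[x], [y], by simp, by simpa, by simpa⟩

theorem Nodup.not_pair_sublist_swap {α : Type*} {x y : α} {w : List α} (hw : w.Nodup)
    (h : [x, y] <+ w) : ¬[y, x] <+ w := by
  induction w with
  | nil => simp at h
  | cons c w ih =>
    rw [nodup_cons] at hw
    intro h'
    rw [sublist_cons_iff] at h h'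
    grind

end List

open List

theorem mem_invSet {x y : ℕ} {w : List ℕ} : (x, y) ∈ invSet w ↔ y < x ∧ [x, y] <+ w := by
  simp [invSet, pair_sublist_iff_getElem?]

theorem List.Sublist.invSet_subset {u w : List ℕ} (h : u <+ w) : invSet u ⊆ invSet w := by
  rintro ⟨x, y⟩ hxy
  rw [mem_invSet] at hxy ⊢
  exact ⟨hxy.1, hxy.2.trans h⟩

theorem invSet_filter (P : ℕ → Bool) (w : List ℕ) :
    invSet (w.filter P) = invSet w ∩ {q | P q.1 ∧ P q.2} := by
  ext ⟨x, y⟩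
  simp only [Set.mem_inter_iff, Set.mem_ofPred_eq, mem_invSet]
  constructor
  · rintro ⟨hyx, h⟩
    have hx := (mem_filter.mp (h.subset (mem_cons_self ..))).2
    have hy := (mem_filter.mp (h.subset (mem_cons_of_mem _ (mem_singleton_self y)))).2
    exact ⟨⟨hyx, h.trans (filter_sublist)⟩, hx, hy⟩
  · rintro ⟨⟨hyx, h⟩, hx, hy⟩
    exact ⟨hyx, by simpa [hx, hy] using h.filter P⟩

theorem mem_invSet_append {x y : ℕ} {u v : List ℕ} :
    (x, y) ∈ invSet (u ++ v) ↔
      (x, y) ∈ invSet u ∨ (x, y) ∈ invSet v ∨ (y < x ∧ x ∈ u ∧ y ∈ v) := by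
  simp only [mem_invSet, pair_sublist_append_iff]
  tauto

theorem eq_of_perm_of_invSet_eq {u v : List ℕ} (huv : u ~ v) (hu : u.Nodup)
    (h : invSet u = invSet v) : u = v := by
  -- In a repetition-free word `x` precedes `y` iff `(x, y)` is an inversion, or `x < y` and
  -- `(y, x)` is not one; so both words are sorted by the same antisymmetric relation `R`.
  set R : ℕ → ℕ → Prop := fun x y => (y < x → (x, y) ∈ invSet u) ∧ (x < y → (y, x) ∉ invSet u)
  have hR : ∀ w : List ℕ, w.Nodup → invSet w = invSet u → w.Pairwise R := by
    intro w hw hwu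
    refine pairwise_iff_forall_sublist.mpr fun {x y} hxy => ?_
    simp only [R, ← hwu, mem_invSet]
    exact ⟨fun hyx => ⟨hyx, hxy⟩, fun _ hyx => hw.not_pair_sublist_swap hxy hyx.2⟩
  refine huv.eq_of_pairwise (fun x y _ _ hxy hyx => ?_) (hR u hu rfl)
    (hR v (huv.nodup_iff.mp hu) h.symm)
  rcases lt_trichotomy x y with hlt | rfl | hgt
  · exact absurd (hyx.1 hlt) (hxy.2 hlt)
  · rfl
  · exact absurd (hxy.1 hgt) (hyx.2 hgt)

theorem filter_eq_of_weakLe_of_weakLe (P : ℕ → Bool) {w₁ σ w₂ : List ℕ} (hσ : σ ~ w₁)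
    (hnd : σ.Nodup) (h₁ : weakLe w₁ σ) (h₂ : weakLe σ w₂) (hw : w₂.filter P = w₁.filter P) :
    σ.filter P = w₁.filter P := by
  refine eq_of_perm_of_invSet_eq (hσ.filter P) (hnd.filter P) (Set.Subset.antisymm ?_ ?_)
  · calc invSet (σ.filter P) = invSet σ ∩ {q | P q.1 ∧ P q.2} := invSet_filter P σ
      _ ⊆ invSet w₂ ∩ {q | P q.1 ∧ P q.2} := Set.inter_subset_inter_left _ h₂
      _ = invSet (w₁.filter P) := by rw [← hw, invSet_filter]
  · rw [invSet_filter, invSet_filter]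
    exact Set.inter_subset_inter_left _ h₁

@[simp]
theorem shuffles_nil_left (v : List ℕ) : shuffles [] v = [v] := by
  rw [shuffles]

@[simp]
theorem shuffles_nil_right (u : List ℕ) : shuffles u [] = [u] := by
  cases u <;> simp [shuffles]

theorem cons_mem_shuffles_cons_left {c : ℕ} {u v τ : List ℕ} (h : τ ∈ shuffles u v) :
    c :: τ ∈ shuffles (c :: u) v := by
  cases v with
  | nil => simp_all
  | cons b v => rw [shuffles]; exact mem_append_left _ (mem_map_of_mem h)

theorem cons_mem_shuffles_cons_right {c : ℕ} {u v τ : List ℕ} (h : τ ∈ shuffles u v) :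
    c :: τ ∈ shuffles u (c :: v) := by
  cases u with
  | nil => simp_all
  | cons a u => rw [shuffles]; exact mem_append_right _ (mem_map_of_mem h)

theorem mem_shuffles_filter (P : ℕ → Bool) (σ : List ℕ) :
    σ ∈ shuffles (σ.filter P) (σ.filter (!P ·)) := by
  induction σ with
  | nil => simp
  | cons c σ ih =>
    cases hc : P c
    · simpa [hc] using cons_mem_shuffles_cons_right ih
    · simpa [hc] using cons_mem_shuffles_cons_left ih

theorem mem_shuffles_iff_filter (P : ℕ → Bool) {u v σ : List ℕ} (hu : ∀ x ∈ u, P x)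
    (hv : ∀ x ∈ v, ¬P x) : σ ∈ shuffles u v ↔ σ.filter P = u ∧ σ.filter (!P ·) = v := by
  refine ⟨fun hσ => ?_, fun ⟨hσu, hσv⟩ => hσu ▸ hσv ▸ mem_shuffles_filter P σ⟩
  induction u, v using shuffles.induct generalizing σ with
  | case1 v =>
    obtain rfl : σ = v := by simpa using hσ
    exact ⟨filter_eq_nil_iff.mpr (by simpa using hv), filter_eq_self.mpr (by simpa using hv)⟩
  | case2 u _ =>
    obtain rfl : σ = u := by simpa using hσ
    exact ⟨filter_eq_self.mpr hu, filter_eq_nil_iff.mpr (by simpa using hu)⟩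
  | case3 a u b v ih₁ ih₂ =>
    rw [shuffles] at hσ
    rcases mem_append.mp hσ with hσ | hσ <;> obtain ⟨τ, hτ, rfl⟩ := mem_map.mp hσ
    · have ⟨hτu, hτv⟩ := ih₁ (fun x hx => hu x (mem_cons_of_mem a hx)) hv hτ
      simp [hu a (mem_cons_self ..), hτu, hτv]
    · have ⟨hτu, hτv⟩ := ih₂ hu (fun x hx => hv x (mem_cons_of_mem b hx)) hτ
      simp [hv b (mem_cons_self ..), hτu, hτv]

theorem nodup_shuffles {u v : List ℕ} (h : u.Disjoint v) : (shuffles u v).Nodup := by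
  induction u, v using shuffles.induct with
  | case1 v => simp
  | case2 u _ => simp
  | case3 a u b v ih₁ ih₂ =>
    rw [shuffles]
    have hab : a ≠ b := fun hab => h (mem_cons_self ..) (hab ▸ mem_cons_self ..)
    refine Nodup.append (ih₁ ?_ |>.map cons_injective) (ih₂ ?_ |>.map cons_injective) ?_
    · exact (disjoint_cons_left.mp h).2
    · exact (disjoint_cons_right.mp h).2
    · simp only [List.Disjoint, mem_map]
      rintro _ ⟨_, _, rfl⟩ ⟨_, _, h⟩
      exact hab (cons_eq_cons.mp h).1.symm

theorem weakLe_append_filter_lt (p : ℕ) (σ : List ℕ) :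
    weakLe (σ.filter (· < p) ++ σ.filter (fun x => !decide (x < p))) σ := by
  rintro ⟨x, y⟩ hxy
  rcases mem_invSet_append.mp hxy with hxy | hxy | ⟨hyx, hx, hy⟩
  · exact filter_sublist.invSet_subset hxy
  · exact filter_sublist.invSet_subset hxy
  · simp only [mem_filter, decide_eq_true_eq, Bool.not_eq_true', decide_eq_false_iff_not] at hx hy
    omega

theorem weakLe_filter_not_lt_append (p : ℕ) (σ : List ℕ) :
    weakLe σ (σ.filter (fun x => !decide (x < p)) ++ σ.filter (· < p)) := by
  rintro ⟨x, y⟩ hxy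
  have ⟨hyx, hsub⟩ := mem_invSet.mp hxy
  have hx : x ∈ σ := hsub.subset (mem_cons_self ..)
  have hy : y ∈ σ := hsub.subset (mem_cons_of_mem _ (mem_singleton_self y))
  rw [mem_invSet_append, invSet_filter, invSet_filter]
  by_cases hyp : y < p
  · by_cases hxp : x < p
    · exact .inr (.inl ⟨hxy, by simp [hxp, hyp]⟩)
    · exact .inr (.inr ⟨hyx, by simp [hx, hxp], by simp [hy, hyp]⟩)
  · exact .inl ⟨hxy, by simpa using (⟨by omega, by omega⟩ : p ≤ x ∧ p ≤ y)⟩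

theorem mem_shuffles_map_add_iff {p q : ℕ} {a b σ : List ℕ} (ha : a ~ range p)
    (hb : b ~ range q) :
    σ ∈ shuffles a (b.map (· + p)) ↔
      σ ~ range (p + q) ∧ weakLe (a ++ b.map (· + p)) σ ∧ weakLe σ (b.map (· + p) ++ a) := by
  set b' := b.map (· + p)
  have ha_lt : ∀ x ∈ a, x < p := fun x hx => mem_range.mp (ha.subset hx)
  have hb'_ge : ∀ x ∈ b', p ≤ x := by simp [b']
  have hrange : a ++ b' ~ range (p + q) := by
    rw [range_add]
    exact ha.append (by simpa [b', add_comm] using hb.map (· + p))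
  rw [mem_shuffles_iff_filter (· < p) (by simpa using ha_lt) (by simpa using hb'_ge)]
  constructor
  · rintro ⟨hσa, hσb⟩
    refine ⟨?_, hσa ▸ hσb ▸ weakLe_append_filter_lt p σ,
      hσa ▸ hσb ▸ weakLe_filter_not_lt_append p σ⟩
    calc σ ~ σ.filter (· < p) ++ σ.filter (fun x => !decide (x < p)) :=
          (filter_append_perm _ σ).symm
      _ = a ++ b' := by rw [hσa, hσb]
      _ ~ range (p + q) := hrange
  · rintro ⟨hσ, h₁, h₂⟩
    have hσ' : σ ~ a ++ b' := hσ.trans hrange.symm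
    have hnd : σ.Nodup := hσ.nodup_iff.mpr nodup_range
    have ha_lt' : a.filter (· < p) = a := filter_eq_self.mpr (by simpa using ha_lt)
    have ha_ge : a.filter (fun x => !decide (x < p)) = [] :=
      filter_eq_nil_iff.mpr (by simpa using ha_lt)
    have hb'_lt : b'.filter (· < p) = [] := filter_eq_nil_iff.mpr (by simpa using hb'_ge)
    have hb'_ge' : b'.filter (fun x => !decide (x < p)) = b' :=
      filter_eq_self.mpr (by simpa using hb'_ge)
    constructor
    · simpa [ha_lt', hb'_lt] using
        filter_eq_of_weakLe_of_weakLe (· < p) hσ' hnd h₁ h₂ (by simp [ha_lt', hb'_lt])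
    · simpa [ha_ge, hb'_ge'] using filter_eq_of_weakLe_of_weakLe (fun x => !decide (x < p))
        hσ' hnd h₁ h₂ (by simp [ha_ge, hb'_ge'])

open scoped Classical in
/-- **Loday–Ronco.** For `a ∈ S_p`, `b ∈ S_q`, the shifted shuffle
`a ⊔̄ b` (the sum of all shuffles of `a` and `b̄`) is the sum of all permutations in
the interval `[a □ b, b △ a]` of the right weak order. -/
theorem loday_ronco_interval (p q : ℕ) (a b : List ℕ)
    (ha : IsPermWord a) (hb : IsPermWord b)
    (hap : a.length = p) (hbq : b.length = q) :
    ((shuffles a (b.map (· + p))).map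
        (fun σ => Finsupp.single σ (1 : ℤ))).sum =
      ∑ σ ∈ (((List.range (p + q)).permutations.toFinset).filter
          (fun σ => weakLe (squareC a b) σ ∧ weakLe σ (triangle b a))),
        Finsupp.single σ (1 : ℤ) := by
  subst hap hbq
  have hdisj : a.Disjoint (b.map (· + a.length)) := by
    intro x hxa hxb
    obtain ⟨y, -, rfl⟩ := mem_map.mp hxb
    exact absurd (mem_range.mp (ha.subset hxa)) (by omega)
  rw [← sum_toFinset _ (nodup_shuffles hdisj)]
  congr 1
  ext σ
  rw [mem_toFinset, Finset.mem_filter, mem_toFinset, mem_permutations, squareC, triangle]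
  exact mem_shuffles_map_add_iff ha hb
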